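/- arXiv:2507.12413 — 7 statements merged into one kernel-verified Lean document; each statement's English description precedes it below -/
import Mathlib

section
/- Let f : ℝⁿ → ℝ be positively homogeneous (f(αv) = α f(v) for all α > 0 and f(0) = 0) and suppose f = g - h where g, h : ℝⁿ → ℝ are convex. Then f(v) = g'(0; v) - h'(0; v) for all v, where g'(0; v) denotes the one-sided directional derivative of g at 0 in direction v; consequently f is the difference of two positively homogeneous convex functions. -/
open Filter Set

def dirDerivAt {E : Type*} [NormedAddCommGroup E] [NormedSpace ℝ E]
    (f : E → ℝ) (x v : E) (d : ℝ) : Prop :=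
  Tendsto (fun τ : ℝ => (f (x + τ • v) - f x) / τ) (nhdsWithin 0 (Set.Ioi 0)) (nhds d)

def PosHomog {E : Type*} [NormedAddCommGroup E] [NormedSpace ℝ E] (f : E → ℝ) : Prop :=
  f 0 = 0 ∧ ∀ α : ℝ, 0 < α → ∀ v, f (α • v) = α * f v

variable {E : Type*} [NormedAddCommGroup E] [NormedSpace ℝ E]

/-- slope of `g` at `0` in direction `v` -/
noncomputable def slp (g : E → ℝ) (v : E) (τ : ℝ) : ℝ := (g (τ • v) - g 0) / τ

lemma dirDerivAt_iff_slp (g : E → ℝ) (v : E) (d : ℝ) :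
    dirDerivAt g 0 v d ↔ Tendsto (slp g v) (nhdsWithin 0 (Set.Ioi 0)) (nhds d) := by
  simp only [dirDerivAt, zero_add]
  exact Iff.rfl

lemma slp_mono {g : E → ℝ} (hg : ConvexOn ℝ Set.univ g) (v : E) :
    MonotoneOn (slp g v) (Set.Ioi 0) := by
  intro a ha b hb hab
  simp only [Set.mem_Ioi] at ha hb
  have key : g (a • v) ≤ (a / b) * g (b • v) + ((b - a) / b) * g 0 := by
    have h1 : (0:ℝ) ≤ a / b := by positivity
    have h2 : (0:ℝ) ≤ (b - a) / b := by
      apply div_nonneg (by linarith) hb.le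
    have h3 : a / b + (b - a) / b = 1 := by field_simp; ring
    have := hg.2 (Set.mem_univ (b • v)) (Set.mem_univ (0:E)) h1 h2 h3
    simpa [smul_smul, div_mul_cancel₀ _ hb.ne'] using this
  simp only [slp]
  rw [div_le_div_iff₀ ha hb]
  have := mul_le_mul_of_nonneg_right key hb.le
  have e : (a / b * g (b • v) + (b - a) / b * g 0) * b = a * g (b • v) + (b - a) * g 0 := by
    field_simp
  rw [e] at this
  nlinarith

lemma slp_lb {g : E → ℝ} (hg : ConvexOn ℝ Set.univ g) (v : E) {τ : ℝ} (hτ : 0 < τ) :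
    g 0 - g (-v) ≤ slp g v τ := by
  have hτ1 : (0:ℝ) < τ + 1 := by linarith
  have h1 : (0:ℝ) ≤ τ / (τ + 1) := by positivity
  have h2 : (0:ℝ) ≤ 1 / (τ + 1) := by positivity
  have h3 : τ / (τ + 1) + 1 / (τ + 1) = 1 := by field_simp
  have := hg.2 (Set.mem_univ (-v)) (Set.mem_univ (τ • v)) h1 h2 h3
  have harg : (τ / (τ + 1)) • (-v) + (1 / (τ + 1)) • (τ • v) = (0 : E) := by
    rw [smul_smul]
    have : (1 / (τ + 1)) * τ = τ / (τ + 1) := by ring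
    rw [this, smul_neg, neg_add_eq_zero]
  rw [harg] at this
  rw [slp, le_div_iff₀ hτ]
  simp only [smul_eq_mul] at this
  have := mul_le_mul_of_nonneg_right this hτ1.le
  have e : (τ / (τ + 1) * g (-v) + 1 / (τ + 1) * g (τ • v)) * (τ + 1)
      = τ * g (-v) + g (τ • v) := by field_simp
  rw [e] at this
  nlinarith

lemma slp_bddBelow {g : E → ℝ} (hg : ConvexOn ℝ Set.univ g) (v : E) :
    BddBelow (slp g v '' Set.Ioi 0) := by
  refine ⟨g 0 - g (-v), ?_⟩
  rintro _ ⟨τ, hτ, rfl⟩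
  exact slp_lb hg v hτ

/-- the one-sided directional derivative at 0 -/
noncomputable def dG (g : E → ℝ) (v : E) : ℝ := sInf (slp g v '' Set.Ioi 0)

lemma dirDerivAt_dG {g : E → ℝ} (hg : ConvexOn ℝ Set.univ g) (v : E) :
    dirDerivAt g 0 v (dG g v) := by
  rw [dirDerivAt_iff_slp]
  exact MonotoneOn.tendsto_nhdsGT (slp_mono hg v) (slp_bddBelow hg v)

lemma dG_unique {g : E → ℝ} (hg : ConvexOn ℝ Set.univ g) {v : E} {d : ℝ}
    (hd : dirDerivAt g 0 v d) : d = dG g v :=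
  tendsto_nhds_unique ((dirDerivAt_iff_slp g v d).1 hd)
    ((dirDerivAt_iff_slp g v _).1 (dirDerivAt_dG hg v))

lemma dG_le_slp {g : E → ℝ} (hg : ConvexOn ℝ Set.univ g) (v : E) {τ : ℝ} (hτ : 0 < τ) :
    dG g v ≤ slp g v τ :=
  csInf_le (slp_bddBelow hg v) ⟨τ, hτ, rfl⟩

lemma dG_posHomog {g : E → ℝ} (hg : ConvexOn ℝ Set.univ g) : PosHomog (dG g) := by
  constructor
  · refine (dG_unique hg ?_).symm
    rw [dirDerivAt_iff_slp]
    have : slp g 0 = fun _ : ℝ => (0:ℝ) := by funext τ; simp [slp]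
    rw [this]
    exact tendsto_const_nhds
  · intro α hα v
    refine (dG_unique hg ?_).symm
    rw [dirDerivAt_iff_slp]
    have hmap : Tendsto (fun τ : ℝ => α * τ) (nhdsWithin 0 (Set.Ioi 0)) (nhdsWithin 0 (Set.Ioi 0)) := by
      rw [tendsto_nhdsWithin_iff]
      constructor
      · have : Tendsto (fun τ : ℝ => α * τ) (nhds 0) (nhds 0) := by
          simpa using (continuous_mul_left α).tendsto (0:ℝ)
        exact this.mono_left nhdsWithin_le_nhds
      · filter_upwards [self_mem_nhdsWithin] with τ hτ
        exact mul_pos hα hτ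
    have h1 : Tendsto (fun τ : ℝ => α * slp g v (α * τ)) (nhdsWithin 0 (Set.Ioi 0))
        (nhds (α * dG g v)) :=
      (((dirDerivAt_iff_slp g v _).1 (dirDerivAt_dG hg v)).comp hmap).const_mul α
    refine h1.congr' ?_
    filter_upwards [self_mem_nhdsWithin] with τ hτ
    have hτ' : (0:ℝ) < τ := hτ
    simp only [slp, smul_smul]
    rw [mul_comm α τ]
    field_simp

lemma dG_convexOn {g : E → ℝ} (hg : ConvexOn ℝ Set.univ g) :
    ConvexOn ℝ Set.univ (dG g) := by
  refine ⟨convex_univ, fun u _ w _ a b ha hb hab => ?_⟩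
  have h1 : ∀ τ ∈ Set.Ioi (0:ℝ), dG g (a • u + b • w) ≤ a * slp g u τ + b * slp g w τ := by
    intro τ hτ
    have hτ' : (0:ℝ) < τ := hτ
    refine (dG_le_slp hg _ hτ').trans ?_
    have harg : τ • (a • u + b • w) = a • (τ • u) + b • (τ • w) := by
      rw [smul_add, smul_smul, smul_smul, smul_smul, smul_smul, mul_comm τ a, mul_comm τ b]
    have hcv := hg.2 (Set.mem_univ (τ • u)) (Set.mem_univ (τ • w)) ha hb hab
    simp only [slp, harg, smul_eq_mul] at hcv ⊢
    have e : a * ((g (τ • u) - g 0) / τ) + b * ((g (τ • w) - g 0) / τ)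
        = (a * (g (τ • u) - g 0) + b * (g (τ • w) - g 0)) / τ := by ring
    rw [e]
    gcongr
    have h0 : a * g 0 + b * g 0 = g 0 := by rw [← add_mul, hab, one_mul]
    nlinarith
  have h2 : Tendsto (fun τ => a * slp g u τ + b * slp g w τ) (nhdsWithin 0 (Set.Ioi 0))
      (nhds (a * dG g u + b * dG g w)) :=
    ((((dirDerivAt_iff_slp g u _).1 (dirDerivAt_dG hg u)).const_mul a).add
      (((dirDerivAt_iff_slp g w _).1 (dirDerivAt_dG hg w)).const_mul b))
  refine ge_of_tendsto h2 ?_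
  filter_upwards [self_mem_nhdsWithin] with τ hτ using h1 τ hτ
  
theorem stmt0 {n : ℕ} (f g h : EuclideanSpace ℝ (Fin n) → ℝ)
    (hf : PosHomog f)
    (hg : ConvexOn ℝ Set.univ g) (hh : ConvexOn ℝ Set.univ h)
    (hfgh : ∀ v, f v = g v - h v) :
    (∀ v dg dh, dirDerivAt g 0 v dg → dirDerivAt h 0 v dh → f v = dg - dh) ∧
    ∃ g₀ h₀ : EuclideanSpace ℝ (Fin n) → ℝ,
      ConvexOn ℝ Set.univ g₀ ∧ ConvexOn ℝ Set.univ h₀ ∧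
      PosHomog g₀ ∧ PosHomog h₀ ∧ ∀ v, f v = g₀ v - h₀ v := by
  have main : ∀ v dg dh, dirDerivAt g 0 v dg → dirDerivAt h 0 v dh → f v = dg - dh := by
    intro v dg dh Hg Hh
    have Hg' := (dirDerivAt_iff_slp g v dg).1 Hg
    have Hh' := (dirDerivAt_iff_slp h v dh).1 Hh
    have hsub : Tendsto (fun τ => slp g v τ - slp h v τ) (nhdsWithin 0 (Set.Ioi 0))
        (nhds (dg - dh)) := Hg'.sub Hh'
    have heq : Tendsto (fun _ : ℝ => f v) (nhdsWithin 0 (Set.Ioi 0)) (nhds (dg - dh)) := by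
      refine hsub.congr' ?_
      filter_upwards [self_mem_nhdsWithin] with τ hτ
      have hτ' : (0:ℝ) < τ := hτ
      simp only [slp]
      rw [div_sub_div_same]
      have : g (τ • v) - g 0 - (h (τ • v) - h 0) = f (τ • v) - f 0 := by
        rw [hfgh, hfgh]; ring
      rw [this, hf.1, sub_zero, hf.2 τ hτ' v, mul_div_cancel_left₀ _ hτ'.ne']
    exact tendsto_nhds_unique tendsto_const_nhds heq
  refine ⟨main, dG g, dG h, dG_convexOn hg, dG_convexOn hh, dG_posHomog hg, dG_posHomog hh, ?_⟩
  intro v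
  exact main v _ _ (dirDerivAt_dG hg v) (dirDerivAt_dG hh v)
end

section
/- If f : ℝⁿ → ℝ is locally Lipschitz and directionally differentiable at x̄, and its directional derivative v ↦ f'(x̄; v) can be written as the difference of two convex functions on ℝⁿ, then there exist compact convex sets A, B ⊆ ℝⁿ such that f'(x̄; v) = max_{a∈A} ⟨a,v⟩ - max_{b∈B} ⟨b,v⟩ for all v. -/
open Filter

open Set

set_option linter.unusedSectionVars false
set_option maxHeartbeats 1000000


variable {E : Type*} [NormedAddCommGroup E] [InnerProductSpace ℝ E] [FiniteDimensional ℝ E]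

noncomputable def dcSlope (p : E → ℝ) (v : E) (t : ℝ) : ℝ := (p (t • v) - p 0) / t
noncomputable def dcD (p : E → ℝ) (v : E) : ℝ := sInf (dcSlope p v '' Ioi 0)

lemma dcSlope_mono (p : E → ℝ) (hp : ConvexOn ℝ univ p) (v : E) :
    MonotoneOn (dcSlope p v) (Ioi 0) := by
  rintro t₁ (ht₁ : (0:ℝ) < t₁) t₂ (ht₂ : (0:ℝ) < t₂) h
  have ha : (0:ℝ) ≤ t₁ / t₂ := by positivity
  have hb : (0:ℝ) ≤ 1 - t₁ / t₂ := by
    have : t₁ / t₂ ≤ 1 := by rw [div_le_one ht₂]; exact h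
    linarith
  have key := hp.2 (mem_univ (t₂ • v)) (mem_univ (0 : E)) ha hb (by ring)
  rw [smul_zero, add_zero, smul_smul, div_mul_cancel₀ _ ht₂.ne', smul_eq_mul, smul_eq_mul] at key
  have key2 := mul_le_mul_of_nonneg_right key ht₂.le
  have e1 : (t₁ / t₂ * p (t₂ • v) + (1 - t₁ / t₂) * p 0) * t₂
      = t₁ * p (t₂ • v) + (t₂ - t₁) * p 0 := by field_simp
  rw [e1] at key2
  unfold dcSlope
  rw [div_le_div_iff₀ ht₁ ht₂]
  linarith

lemma dcSlope_lb (p : E → ℝ) (hp : ConvexOn ℝ univ p) (v : E) {t : ℝ} (ht : 0 < t) :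
    p 0 - p (-v) ≤ dcSlope p v t := by
  have h1t : (0:ℝ) < 1 + t := by linarith
  have ha : (0:ℝ) ≤ t / (1 + t) := by positivity
  have hb : (0:ℝ) ≤ 1 / (1 + t) := by positivity
  have hab : t / (1 + t) + 1 / (1 + t) = 1 := by
    rw [← add_div, add_comm]; exact div_self h1t.ne'
  have key := hp.2 (mem_univ (-v)) (mem_univ (t • v)) ha hb hab
  have h1 : (t / (1 + t)) • (-v) + (1 / (1 + t)) • (t • v) = (0 : E) := by
    rw [smul_neg, smul_smul, ← neg_smul, ← add_smul]
    convert zero_smul ℝ v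
    field_simp
    ring
  rw [h1, smul_eq_mul, smul_eq_mul] at key
  have key2 := mul_le_mul_of_nonneg_right key h1t.le
  have e1 : (t / (1 + t) * p (-v) + 1 / (1 + t) * p (t • v)) * (1 + t)
      = t * p (-v) + p (t • v) := by field_simp
  rw [e1] at key2
  unfold dcSlope
  rw [le_div_iff₀ ht]
  nlinarith

lemma dcSlope_bddBelow (p : E → ℝ) (hp : ConvexOn ℝ univ p) (v : E) :
    BddBelow (dcSlope p v '' Ioi 0) := by
  refine ⟨p 0 - p (-v), ?_⟩
  rintro x ⟨t, ht, rfl⟩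
  exact dcSlope_lb p hp v ht

lemma dcD_tendsto (p : E → ℝ) (hp : ConvexOn ℝ univ p) (v : E) :
    Tendsto (dcSlope p v) (nhdsWithin 0 (Ioi 0)) (nhds (dcD p v)) :=
  MonotoneOn.tendsto_nhdsGT (dcSlope_mono p hp v) (dcSlope_bddBelow p hp v)

lemma tendsto_mul_pos_nhdsWithin {c : ℝ} (hc : 0 < c) :
    Tendsto (fun t : ℝ => c * t) (nhdsWithin 0 (Ioi 0)) (nhdsWithin 0 (Ioi 0)) := by
  rw [tendsto_nhdsWithin_iff]
  constructor
  · have h : Tendsto (fun t : ℝ => c * t) (nhds 0) (nhds 0) := by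
      simpa using (continuous_mul_left c).tendsto (0 : ℝ)
    exact h.mono_left nhdsWithin_le_nhds
  · filter_upwards [self_mem_nhdsWithin] with t ht
    exact mul_pos hc ht

lemma dcD_zero (p : E → ℝ) (hp : ConvexOn ℝ univ p) : dcD p (0 : E) = 0 := by
  refine tendsto_nhds_unique (dcD_tendsto p hp 0) ?_
  have h : dcSlope p (0 : E) = fun _ => (0 : ℝ) := by
    funext t; simp [dcSlope]
  rw [h]; exact tendsto_const_nhds

lemma dcD_smul (p : E → ℝ) (hp : ConvexOn ℝ univ p) {c : ℝ} (hc : 0 < c) (v : E) :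
    dcD p (c • v) = c * dcD p v := by
  refine tendsto_nhds_unique (dcD_tendsto p hp (c • v)) ?_
  have h : dcSlope p (c • v) = fun t => c * dcSlope p v (c * t) := by
    funext t
    by_cases ht : t = 0
    · simp [dcSlope, ht]
    · unfold dcSlope
      rw [smul_smul, mul_comm t c, ← smul_smul]
      rw [smul_smul]
      field_simp
  rw [h]
  exact ((dcD_tendsto p hp v).comp (tendsto_mul_pos_nhdsWithin hc)).const_mul c

lemma dcD_add_le (p : E → ℝ) (hp : ConvexOn ℝ univ p) (u v : E) :
    dcD p (u + v) ≤ dcD p u + dcD p v := by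
  have hineq : ∀ t : ℝ, 0 < t →
      dcSlope p (u + v) t ≤ dcSlope p u (2 * t) + dcSlope p v (2 * t) := by
    intro t ht
    have key := hp.2 (mem_univ ((2 * t) • u)) (mem_univ ((2 * t) • v))
      (by norm_num : (0:ℝ) ≤ 1/2) (by norm_num : (0:ℝ) ≤ 1/2) (by norm_num)
    have he : (1/2 : ℝ) • ((2 * t) • u) + (1/2 : ℝ) • ((2 * t) • v) = t • (u + v) := by
      rw [smul_smul, smul_smul, smul_add]
      have : (1/2 : ℝ) * (2 * t) = t := by ring
      rw [this]
    rw [he, smul_eq_mul, smul_eq_mul] at key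
    unfold dcSlope
    rw [← add_div, div_le_div_iff₀ ht (by positivity)]
    nlinarith [mul_le_mul_of_nonneg_left key ht.le]
  have h1 := dcD_tendsto p hp (u + v)
  have h2 : Tendsto (fun t => dcSlope p u (2 * t) + dcSlope p v (2 * t))
      (nhdsWithin 0 (Ioi 0)) (nhds (dcD p u + dcD p v)) :=
    (((dcD_tendsto p hp u).comp (tendsto_mul_pos_nhdsWithin two_pos)).add
      ((dcD_tendsto p hp v).comp (tendsto_mul_pos_nhdsWithin two_pos)))
  refine le_of_tendsto_of_tendsto h1 h2 ?_
  filter_upwards [self_mem_nhdsWithin] with t ht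
  exact hineq t ht

lemma dcD_le_slope (p : E → ℝ) (hp : ConvexOn ℝ univ p) (v : E) {t : ℝ} (ht : 0 < t) :
    dcD p v ≤ dcSlope p v t :=
  csInf_le (dcSlope_bddBelow p hp v) ⟨t, ht, rfl⟩

lemma sublinear_rep (s : E → ℝ) (M : ℝ)
    (hadd : ∀ u v, s (u + v) ≤ s u + s v)
    (hhom : ∀ c : ℝ, 0 < c → ∀ v, s (c • v) = c * s v)
    (h0 : s 0 = 0) (hM : ∀ v, s v ≤ M * ‖v‖) :
    ∃ A : Set E, A.Nonempty ∧ IsCompact A ∧ Convex ℝ A ∧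
      ∀ v, s v = sSup ((fun a => (inner ℝ a v : ℝ)) '' A) := by
  have hsneg : ∀ v, -s (-v) ≤ s v := by
    intro v
    have h1 := hadd v (-v)
    rw [add_neg_cancel, h0] at h1
    linarith
  set A := {a : E | ∀ w, (inner ℝ a w : ℝ) ≤ s w} with hA
  have key : ∀ v, ∃ a ∈ A, (inner ℝ a v : ℝ) = s v := by
    intro v
    have hscale : ∀ c : ℝ, c • v = 0 → c • s v = 0 := by
      intro c hc
      rcases smul_eq_zero.1 hc with h | h
      · simp [h]
      · rw [h, h0, smul_zero]
    set fpm := LinearPMap.mkSpanSingleton' (σ := RingHom.id ℝ) v (s v) hscale with hfpm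
    have hf : ∀ x : fpm.domain, fpm x ≤ s x := by
      rintro ⟨x, hx⟩
      rcases Submodule.mem_span_singleton.1 hx with ⟨c, rfl⟩
      have happ : fpm ⟨c • v, hx⟩ = c • s v :=
        LinearPMap.mkSpanSingleton'_apply v (s v) hscale c hx
      rw [happ]
      show c • s v ≤ s (c • v)
      rcases lt_trichotomy c 0 with hc | hc | hc
      · have h1 : s (c • v) = (-c) * s (-v) := by
          rw [show c • v = (-c) • (-v) by simp, hhom (-c) (by linarith)]
        have h2 := hsneg v
        rw [smul_eq_mul, h1]
        nlinarith
      · rw [hc, zero_smul, zero_smul, h0]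
      · rw [smul_eq_mul, hhom c hc]
    obtain ⟨g, hg1, hg2⟩ :=
      exists_extension_of_le_sublinear fpm s (fun c hc x => hhom c hc x) hadd hf
    set a := (InnerProductSpace.toDual ℝ E).symm (LinearMap.toContinuousLinearMap g) with ha
    have hav : ∀ w, (inner ℝ a w : ℝ) = g w := by
      intro w
      rw [ha]
      exact InnerProductSpace.toDual_symm_apply
    refine ⟨a, fun w => (hav w).trans_le (hg2 w), ?_⟩
    rw [hav v]
    have h3 := hg1 ⟨v, Submodule.mem_span_singleton_self v⟩
    have h4 : fpm ⟨v, Submodule.mem_span_singleton_self v⟩ = s v :=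
      LinearPMap.mkSpanSingleton'_apply_self v (s v) hscale _
    exact h3.trans h4
  obtain ⟨a0, ha0, _⟩ := key 0
  have hclosed : IsClosed A := by
    have : A = ⋂ w, {a : E | (inner ℝ a w : ℝ) ≤ s w} := by
      ext a; simp [hA, mem_iInter]
    rw [this]
    exact isClosed_iInter fun w =>
      isClosed_le (continuous_id.inner continuous_const) continuous_const
  have hsub : A ⊆ Metric.closedBall 0 (max M 0) := by
    intro a ha'
    rw [Metric.mem_closedBall, dist_zero_right]
    by_cases hz : a = 0
    · simp [hz, le_max_right]
    · have h1 : (inner ℝ a a : ℝ) ≤ s a := ha' a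
      have h2 : s a ≤ M * ‖a‖ := hM a
      have h3 : (inner ℝ a a : ℝ) = ‖a‖ ^ 2 := real_inner_self_eq_norm_sq a
      have h4 : 0 < ‖a‖ := norm_pos_iff.2 hz
      have h5 : ‖a‖ ≤ M := by nlinarith
      exact h5.trans (le_max_left _ _)
  have hcompact : IsCompact A :=
    (isCompact_closedBall (0 : E) (max M 0)).of_isClosed_subset hclosed hsub
  have hconv : Convex ℝ A := by
    intro a ha' b hb' ta tb hta htb htab
    intro w
    rw [inner_add_left, real_inner_smul_left, real_inner_smul_left]
    have h1 := mul_le_mul_of_nonneg_left (ha' w) hta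
    have h2 := mul_le_mul_of_nonneg_left (hb' w) htb
    have h3 : ta * s w + tb * s w = s w := by rw [← add_mul, htab, one_mul]
    linarith
  refine ⟨A, ⟨a0, ha0⟩, hcompact, hconv, fun v => ?_⟩
  obtain ⟨a, haA, hav⟩ := key v
  refine le_antisymm ?_ ?_
  · rw [← hav]
    exact le_csSup ⟨s v, by rintro x ⟨b, hb, rfl⟩; exact hb v⟩ ⟨a, haA, rfl⟩
  · exact csSup_le ⟨_, ⟨a, haA, rfl⟩⟩ (by rintro x ⟨b, hb, rfl⟩; exact hb v)


lemma dcD_le_norm {E : Type*} [NormedAddCommGroup E] [InnerProductSpace ℝ E]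
    [FiniteDimensional ℝ E] (p : E → ℝ) (hp : ConvexOn ℝ univ p) :
    ∃ M : ℝ, ∀ v, dcD p v ≤ M * ‖v‖ := by
  have hcont : Continuous p := hp.locallyLipschitz.continuous
  obtain ⟨z, hz, hzmax⟩ := (isCompact_closedBall (0 : E) 1).exists_isMaxOn
    ⟨0, by simp⟩ hcont.continuousOn
  replace hzmax : ∀ y ∈ Metric.closedBall (0 : E) 1, p y ≤ p z := fun y hy => hzmax hy
  refine ⟨p z - p 0, fun v => ?_⟩
  by_cases hv : v = 0
  · rw [hv, dcD_zero p hp, norm_zero, mul_zero]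
  · have hnv : 0 < ‖v‖ := norm_pos_iff.2 hv
    have h1 := dcD_le_slope p hp v (t := ‖v‖⁻¹) (by positivity)
    have h2 : dcSlope p v ‖v‖⁻¹ = (p (‖v‖⁻¹ • v) - p 0) * ‖v‖ := by
      unfold dcSlope; rw [div_eq_mul_inv, inv_inv]
    have h3 : ‖(‖v‖⁻¹ • v)‖ ≤ 1 := by
      rw [norm_smul, norm_inv, norm_norm, inv_mul_cancel₀ hnv.ne']
    have h4 : p (‖v‖⁻¹ • v) ≤ p z := hzmax _ (by rwa [Metric.mem_closedBall, dist_zero_right])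
    rw [h2] at h1
    refine h1.trans ?_
    exact mul_le_mul_of_nonneg_right (by linarith) hnv.le

theorem stmt3 {n : ℕ} (f : EuclideanSpace ℝ (Fin n) → ℝ) (x₀ : EuclideanSpace ℝ (Fin n))
    (df : EuclideanSpace ℝ (Fin n) → ℝ)
    (hlip : LocallyLipschitz f)
    (hdd : ∀ v, dirDerivAt f x₀ v (df v))
    (hdc : ∃ p q : EuclideanSpace ℝ (Fin n) → ℝ,
      ConvexOn ℝ Set.univ p ∧ ConvexOn ℝ Set.univ q ∧ ∀ v, df v = p v - q v) :
    ∃ A B : Set (EuclideanSpace ℝ (Fin n)), A.Nonempty ∧ B.Nonempty ∧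
      IsCompact A ∧ IsCompact B ∧ Convex ℝ A ∧ Convex ℝ B ∧
      ∀ v, df v = sSup ((fun a => (inner ℝ a v : ℝ)) '' A) -
        sSup ((fun b => (inner ℝ b v : ℝ)) '' B) := by
  unfold dirDerivAt at hdd
  obtain ⟨p, q, hp, hq, hpq⟩ := hdc
  have hdf0 : df 0 = 0 := by
    refine tendsto_nhds_unique (hdd 0) ?_
    have he : (fun τ : ℝ => (f (x₀ + τ • (0 : EuclideanSpace ℝ (Fin n))) - f x₀) / τ) = fun _ => (0 : ℝ) := by
      funext τ; simp
    have h2 : Tendsto (fun τ : ℝ => (f (x₀ + τ • (0 : EuclideanSpace ℝ (Fin n))) - f x₀) / τ)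
        (nhdsWithin 0 (Ioi 0)) (nhds 0) := by rw [he]; exact tendsto_const_nhds
    exact h2
  have hdfhom : ∀ c : ℝ, 0 < c → ∀ v, df (c • v) = c * df v := by
    intro c hc v
    refine tendsto_nhds_unique (hdd (c • v)) ?_
    have h1 := (hdd v).comp (tendsto_mul_pos_nhdsWithin hc)
    have h2 := h1.const_mul c
    refine Tendsto.congr' ?_ h2
    filter_upwards [self_mem_nhdsWithin] with τ hτ
    have hτ0 : (τ : ℝ) ≠ 0 := ne_of_gt hτ
    show c * ((f (x₀ + (c * τ) • v) - f x₀) / (c * τ)) = (f (x₀ + τ • (c • v)) - f x₀) / τ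
    rw [smul_smul, mul_comm τ c]
    field_simp
  have hpq0 : p 0 - q 0 = 0 := by
    have := hpq 0; linarith [hdf0]
  have hdiff : ∀ v, df v = dcD p v - dcD q v := by
    intro v
    have h1 := (dcD_tendsto p hp v).sub (dcD_tendsto q hq v)
    have h2 : Tendsto (fun t => dcSlope p v t - dcSlope q v t)
        (nhdsWithin 0 (Ioi 0)) (nhds (df v)) := by
      refine Tendsto.congr' ?_ tendsto_const_nhds
      filter_upwards [self_mem_nhdsWithin] with t ht
      have e1 : p (t • v) - q (t • v) = t * df v := by
        have ha := hpq (t • v)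
        have hb := hdfhom t ht v
        linarith
      show (df v : ℝ) = dcSlope p v t - dcSlope q v t
      unfold dcSlope
      rw [div_sub_div_same]
      have e2 : p (t • v) - p 0 - (q (t • v) - q 0) = t * df v := by linarith
      rw [e2, mul_div_cancel_left₀ _ (ne_of_gt ht)]
    exact tendsto_nhds_unique h2 h1
  obtain ⟨Mp, hMp⟩ := dcD_le_norm p hp
  obtain ⟨Mq, hMq⟩ := dcD_le_norm q hq
  obtain ⟨A, hAne, hAc, hAconv, hAs⟩ := sublinear_rep (dcD p) Mp (dcD_add_le p hp)
    (fun c hc v => dcD_smul p hp hc v) (dcD_zero p hp) hMp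
  obtain ⟨B, hBne, hBc, hBconv, hBs⟩ := sublinear_rep (dcD q) Mq (dcD_add_le q hq)
    (fun c hc v => dcD_smul q hq hc v) (dcD_zero q hq) hMq
  exact ⟨A, B, hAne, hBne, hAc, hBc, hAconv, hBconv,
    fun v => by rw [hdiff v, hAs v, hBs v]⟩
end

section
/- Let f : ℝⁿ → ℝ be quasi-dc at x̄ (i.e., f is Bouligand differentiable at x̄ and v ↦ f'(x̄;v) is a difference of convex functions) and let g : ℝ → ℝ be Bouligand differentiable. Then the composite g ∘ f satisfies (g∘f)'(x̄; v) = (f'(x̄;v))₊ · g'(f(x̄); 1) + (f'(x̄;v))₋ · g'(f(x̄); -1) for all v, where t₊ = max(t,0), t₋ = max(-t,0), and consequently (g∘f)'(x̄;·) is a difference of convex functions. -/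
open Filter

lemma mapPos (c : ℝ) (hc : 0 < c) : Tendsto (fun τ : ℝ => τ * c) (nhdsWithin 0 (Set.Ioi 0))
    (nhdsWithin 0 (Set.Ioi 0)) := by
  apply tendsto_nhdsWithin_of_tendsto_nhds_of_eventually_within
  · have h : Tendsto (fun τ : ℝ => τ * c) (nhds 0) (nhds (0 * c)) :=
      tendsto_id.mul_const c
    rw [zero_mul] at h
    exact h.mono_left nhdsWithin_le_nhds
  · filter_upwards [self_mem_nhdsWithin] with τ hτ
    exact mul_pos hτ hc

lemma oneDim (g : ℝ → ℝ) (y c dg1 dgm1 : ℝ)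
    (hg1 : dirDerivAt g y 1 dg1) (hgm1 : dirDerivAt g y (-1) dgm1) :
    Tendsto (fun τ : ℝ => (g (y + τ * c) - g y) / τ) (nhdsWithin 0 (Set.Ioi 0))
      (nhds (max c 0 * dg1 + max (-c) 0 * dgm1)) := by
  rcases lt_trichotomy c 0 with hc | hc | hc
  · have h := (hgm1.comp (mapPos (-c) (by linarith))).const_mul (-c)
    have heq : (fun τ : ℝ => (-c) * ((g (y + (τ * (-c)) • (-1:ℝ)) - g y) / (τ * (-c))))
        =ᶠ[nhdsWithin 0 (Set.Ioi 0)] (fun τ : ℝ => (g (y + τ * c) - g y) / τ) := by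
      filter_upwards [self_mem_nhdsWithin] with τ hτ
      have hτ0 : (τ : ℝ) ≠ 0 := ne_of_gt hτ
      have h1 : (τ * (-c)) • (-1 : ℝ) = τ * c := by rw [smul_eq_mul]; ring
      rw [h1]
      have hc0 : c ≠ 0 := ne_of_lt hc
      field_simp
    have hmax : max c 0 = 0 := max_eq_right hc.le
    have hmax2 : max (-c) 0 = -c := max_eq_left (by linarith)
    rw [hmax, hmax2, zero_mul, zero_add]
    exact (h.congr' heq :)
  · subst hc
    simp only [mul_zero, add_zero, sub_self, zero_div, neg_zero, max_self, zero_mul, add_zero]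
    simpa using (tendsto_const_nhds : Tendsto (fun _ : ℝ => (0:ℝ)) _ (nhds 0))
  · have h := (hg1.comp (mapPos c hc)).const_mul c
    have heq : (fun τ : ℝ => c * ((g (y + (τ * c) • (1:ℝ)) - g y) / (τ * c)))
        =ᶠ[nhdsWithin 0 (Set.Ioi 0)] (fun τ : ℝ => (g (y + τ * c) - g y) / τ) := by
      filter_upwards [self_mem_nhdsWithin] with τ hτ
      have hτ0 : (τ : ℝ) ≠ 0 := ne_of_gt hτ
      rw [smul_eq_mul, mul_one]
      have hc0 : c ≠ 0 := ne_of_gt hc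
      field_simp
    have hmax : max c 0 = c := max_eq_left hc.le
    have hmax2 : max (-c) 0 = 0 := max_eq_right (by linarith)
    rw [hmax, hmax2, zero_mul, add_zero]
    exact (h.congr' heq :)

lemma convexMul {E : Type*} [NormedAddCommGroup E] [NormedSpace ℝ E]
    (c : ℝ) (hc : 0 ≤ c) {h : E → ℝ} (hh : ConvexOn ℝ Set.univ h) :
    ConvexOn ℝ Set.univ (fun v => c * h v) := by
  simpa [smul_eq_mul] using hh.smul hc

lemma keyMax (a : ℝ) : max a 0 - max (-a) 0 = a := by
  rcases le_total a 0 with h | h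
  · rw [max_eq_right h, max_eq_left (by linarith)]; ring
  · rw [max_eq_left h, max_eq_right (by linarith)]; ring

theorem stmt4 {n : ℕ} (f : EuclideanSpace ℝ (Fin n) → ℝ) (g : ℝ → ℝ)
    (x₀ : EuclideanSpace ℝ (Fin n)) (df : EuclideanSpace ℝ (Fin n) → ℝ) (dg1 dgm1 : ℝ)
    (hflip : LocallyLipschitz f) (hglip : LocallyLipschitz g)
    (hdf : ∀ v, dirDerivAt f x₀ v (df v))
    (hdc : ∃ p q : EuclideanSpace ℝ (Fin n) → ℝ,
      ConvexOn ℝ Set.univ p ∧ ConvexOn ℝ Set.univ q ∧ ∀ v, df v = p v - q v)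
    (hg1 : dirDerivAt g (f x₀) 1 dg1)
    (hgm1 : dirDerivAt g (f x₀) (-1) dgm1) :
    (∀ v, dirDerivAt (g ∘ f) x₀ v (max (df v) 0 * dg1 + max (-df v) 0 * dgm1)) ∧
    ∃ p q : EuclideanSpace ℝ (Fin n) → ℝ,
      ConvexOn ℝ Set.univ p ∧ ConvexOn ℝ Set.univ q ∧
      ∀ v, max (df v) 0 * dg1 + max (-df v) 0 * dgm1 = p v - q v := by
  constructor
  · intro v
    set y := f x₀ with hy
    set c := df v with hcdef
    obtain ⟨K, t, ht, hK⟩ := hglip y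
    have hfc : Tendsto (fun τ : ℝ => f (x₀ + τ • v)) (nhdsWithin 0 (Set.Ioi 0)) (nhds y) := by
      have hcont : ContinuousAt f x₀ := hflip.continuous.continuousAt
      have hlin : Tendsto (fun τ : ℝ => x₀ + τ • v) (nhds 0) (nhds (x₀ + (0:ℝ) • v)) :=
        tendsto_const_nhds.add ((continuous_id.smul continuous_const).tendsto 0)
      rw [zero_smul, add_zero] at hlin
      exact hcont.tendsto.comp (hlin.mono_left nhdsWithin_le_nhds)
    have hmem1 : ∀ᶠ τ : ℝ in nhdsWithin 0 (Set.Ioi 0), f (x₀ + τ • v) ∈ t := hfc ht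
    have hlin2 : Tendsto (fun τ : ℝ => y + τ * c) (nhdsWithin 0 (Set.Ioi 0)) (nhds y) := by
      have h : Tendsto (fun τ : ℝ => y + τ * c) (nhds 0) (nhds (y + 0 * c)) :=
        tendsto_const_nhds.add (tendsto_id.mul_const c)
      rw [zero_mul, add_zero] at h
      exact h.mono_left nhdsWithin_le_nhds
    have hmem2 : ∀ᶠ τ : ℝ in nhdsWithin 0 (Set.Ioi 0), y + τ * c ∈ t := hlin2 ht
    have hquot : Tendsto (fun τ : ℝ => (f (x₀ + τ • v) - y) / τ) (nhdsWithin 0 (Set.Ioi 0))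
        (nhds c) := hdf v
    have hAbound : Tendsto (fun τ : ℝ => (K : ℝ) * |(f (x₀ + τ • v) - y) / τ - c|)
        (nhdsWithin 0 (Set.Ioi 0)) (nhds 0) := by
      have h0 : Tendsto (fun τ : ℝ => (f (x₀ + τ • v) - y) / τ - c)
          (nhdsWithin 0 (Set.Ioi 0)) (nhds 0) := by
        simpa using hquot.sub_const c
      have h1 := h0.abs.const_mul (K : ℝ)
      simpa using h1
    have hA : Tendsto (fun τ : ℝ => (g (f (x₀ + τ • v)) - g (y + τ * c)) / τ)
        (nhdsWithin 0 (Set.Ioi 0)) (nhds 0) := by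
      apply squeeze_zero_norm' _ hAbound
      filter_upwards [hmem1, hmem2, self_mem_nhdsWithin] with τ h1 h2 hτ
      have hτ0 : (0:ℝ) < τ := hτ
      have hτne : (τ:ℝ) ≠ 0 := ne_of_gt hτ0
      have hd := hK.dist_le_mul _ h1 _ h2
      rw [Real.dist_eq, Real.dist_eq] at hd
      have e1 : ‖(g (f (x₀ + τ • v)) - g (y + τ * c)) / τ‖
          = |g (f (x₀ + τ • v)) - g (y + τ * c)| / τ := by
        rw [Real.norm_eq_abs, abs_div, abs_of_pos hτ0]
      rw [e1]
      have e2 : |f (x₀ + τ • v) - (y + τ * c)| = |(f (x₀ + τ • v) - y) / τ - c| * τ := by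
        have e3 : f (x₀ + τ • v) - (y + τ * c) = ((f (x₀ + τ • v) - y) / τ - c) * τ := by
          field_simp
          ring
        rw [e3, abs_mul, abs_of_pos hτ0]
      calc |g (f (x₀ + τ • v)) - g (y + τ * c)| / τ
          ≤ (K : ℝ) * |f (x₀ + τ • v) - (y + τ * c)| / τ := by
            gcongr
        _ = (K : ℝ) * |(f (x₀ + τ • v) - y) / τ - c| := by
            rw [e2]; field_simp
    have hB := oneDim g y c dg1 dgm1 hg1 hgm1
    have hsum := hA.add hB
    rw [zero_add] at hsum
    have heq : (fun τ : ℝ => (g (f (x₀ + τ • v)) - g (y + τ * c)) / τ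
        + (g (y + τ * c) - g y) / τ)
        = fun τ : ℝ => ((g ∘ f) (x₀ + τ • v) - (g ∘ f) x₀) / τ := by
      funext τ
      rw [← add_div]
      simp [Function.comp, hy]
    rw [heq] at hsum
    exact hsum
  · obtain ⟨p, q, hp, hq, hpq⟩ := hdc
    refine ⟨fun v => max (dg1 + dgm1) 0 * max (p v) (q v) + max (-dg1) 0 * q v
        + max (-dgm1) 0 * p v,
      fun v => max (-(dg1 + dgm1)) 0 * max (p v) (q v) + max dg1 0 * q v
        + max dgm1 0 * p v, ?_, ?_, ?_⟩
    · exact ((convexMul _ (le_max_right _ _) (hp.sup hq)).add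
        (convexMul _ (le_max_right _ _) hq)).add (convexMul _ (le_max_right _ _) hp)
    · exact ((convexMul _ (le_max_right _ _) (hp.sup hq)).add
        (convexMul _ (le_max_right _ _) hq)).add (convexMul _ (le_max_right _ _) hp)
    · intro v
      have h1 : max (df v) 0 = max (p v) (q v) - q v := by
        rw [hpq v]
        rcases le_total (p v) (q v) with h | h
        · rw [max_eq_right (by linarith), max_eq_right h]; ring
        · rw [max_eq_left (by linarith), max_eq_left h]
      have h2 : max (-df v) 0 = max (p v) (q v) - p v := by
        rw [hpq v]
        rcases le_total (p v) (q v) with h | h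
        · rw [max_eq_left (by linarith), max_eq_right h]; ring
        · rw [max_eq_right (by linarith), max_eq_left h]; ring
      rw [h1, h2]
      linear_combination (-(max (p v) (q v))) * keyMax (dg1 + dgm1)
        + q v * keyMax dg1 + p v * keyMax dgm1
end

section
/- Let φ_k, ψ_k : ℝⁿ → ℝ be convex for k = 1,...,m, let f_k = φ_k − ψ_k, and let C ⊆ ℝᵐ be a compact set with |c_k| ≤ β for all c ∈ C and all k. Then the function v ↦ max_{c ∈ C} Σ_k c_k f_k(v) equals −β Σ_k (φ_k(v) + ψ_k(v)) + max_{c ∈ C} Σ_k [(c_k + β) φ_k(v) + (β − c_k) ψ_k(v)], and the second term is a convex function of v; hence v ↦ max_{c∈C} Σ_k c_k f_k(v) is a difference of two convex functions. -/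
lemma convexOn_finset_sum {E : Type*} [AddCommGroup E] [Module ℝ E]
    {ι : Type*} (t : Finset ι) (f : ι → E → ℝ)
    (h : ∀ i ∈ t, ConvexOn ℝ Set.univ (f i)) :
    ConvexOn ℝ Set.univ (fun v => ∑ i ∈ t, f i v) := by
  classical
  induction t using Finset.cons_induction with
  | empty => simpa using convexOn_const (0 : ℝ) convex_univ
  | cons a s ha ih =>
    simp only [Finset.sum_cons]
    exact (h a (Finset.mem_cons_self a s)).add
      (ih fun i hi => h i (Finset.mem_cons_of_mem hi))

theorem stmt11 {n m : ℕ} (φ ψ : Fin m → EuclideanSpace ℝ (Fin n) → ℝ)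
    (hφ : ∀ k, ConvexOn ℝ Set.univ (φ k)) (hψ : ∀ k, ConvexOn ℝ Set.univ (ψ k))
    (C : Set (Fin m → ℝ)) (hC : IsCompact C) (hCne : C.Nonempty)
    (β : ℝ) (hβ : ∀ c ∈ C, ∀ k, |c k| ≤ β) :
    (∀ v, sSup ((fun c : Fin m → ℝ => ∑ k, c k * (φ k v - ψ k v)) '' C)
        = -β * (∑ k, (φ k v + ψ k v))
          + sSup ((fun c : Fin m → ℝ =>
              ∑ k, ((c k + β) * φ k v + (β - c k) * ψ k v)) '' C)) ∧
    ConvexOn ℝ Set.univ (fun v => sSup ((fun c : Fin m → ℝ =>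
        ∑ k, ((c k + β) * φ k v + (β - c k) * ψ k v)) '' C)) ∧
    ∃ p q : EuclideanSpace ℝ (Fin n) → ℝ,
      ConvexOn ℝ Set.univ p ∧ ConvexOn ℝ Set.univ q ∧
      ∀ v, sSup ((fun c : Fin m → ℝ => ∑ k, c k * (φ k v - ψ k v)) '' C) = p v - q v := by
  have hcont : ∀ v, Continuous fun c : Fin m → ℝ =>
      ∑ k, ((c k + β) * φ k v + (β - c k) * ψ k v) := by
    intro v
    exact continuous_finset_sum _ fun k _ =>
      (((continuous_apply k).add continuous_const).mul continuous_const).add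
        ((continuous_const.sub (continuous_apply k)).mul continuous_const)
  have key : ∀ v (c : Fin m → ℝ),
      (∑ k, c k * (φ k v - ψ k v))
        = -β * (∑ k, (φ k v + ψ k v)) + ∑ k, ((c k + β) * φ k v + (β - c k) * ψ k v) := by
    intro v c
    rw [Finset.mul_sum, ← Finset.sum_add_distrib]
    exact Finset.sum_congr rfl fun k _ => by ring
  have hbdd : ∀ v, BddAbove ((fun c : Fin m → ℝ =>
      ∑ k, ((c k + β) * φ k v + (β - c k) * ψ k v)) '' C) := fun v =>
    (hC.image (hcont v)).bddAbove
  have part1 : ∀ v, sSup ((fun c : Fin m → ℝ => ∑ k, c k * (φ k v - ψ k v)) '' C)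
        = -β * (∑ k, (φ k v + ψ k v))
          + sSup ((fun c : Fin m → ℝ =>
              ∑ k, ((c k + β) * φ k v + (β - c k) * ψ k v)) '' C) := by
    intro v
    obtain ⟨c0, hc0, hmax⟩ := hC.exists_isMaxOn hCne (hcont v).continuousOn
    have h1 : sSup ((fun c : Fin m → ℝ =>
        ∑ k, ((c k + β) * φ k v + (β - c k) * ψ k v)) '' C)
        = ∑ k, ((c0 k + β) * φ k v + (β - c0 k) * ψ k v) :=
      IsGreatest.csSup_eq ⟨⟨c0, hc0, rfl⟩, by rintro x ⟨c, hc, rfl⟩; exact hmax hc⟩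
    have h2 : sSup ((fun c : Fin m → ℝ => ∑ k, c k * (φ k v - ψ k v)) '' C)
        = ∑ k, c0 k * (φ k v - ψ k v) := by
      apply IsGreatest.csSup_eq
      refine ⟨⟨c0, hc0, rfl⟩, ?_⟩
      rintro x ⟨c, hc, rfl⟩
      simp only []
      rw [key v c, key v c0]
      have hle := hmax hc
      simp only [Set.mem_setOf_eq] at hle
      linarith
    rw [h1, h2, key v c0]
  have hconv : ∀ c ∈ C, ConvexOn ℝ Set.univ
      (fun v => ∑ k, ((c k + β) * φ k v + (β - c k) * ψ k v)) := by
    intro c hc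
    refine convexOn_finset_sum _ _ fun k _ => ConvexOn.add ?_ ?_
    · have h1 : (0:ℝ) ≤ c k + β := by
        have := hβ c hc k
        have := neg_abs_le (c k)
        linarith
      simpa [smul_eq_mul] using (hφ k).smul h1
    · have h2 : (0:ℝ) ≤ β - c k := by
        have := hβ c hc k
        have := le_abs_self (c k)
        linarith
      simpa [smul_eq_mul] using (hψ k).smul h2
  have part2 : ConvexOn ℝ Set.univ (fun v => sSup ((fun c : Fin m → ℝ =>
      ∑ k, ((c k + β) * φ k v + (β - c k) * ψ k v)) '' C)) := by
    refine ⟨convex_univ, ?_⟩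
    intro x _ y _ a b ha hb hab
    apply csSup_le (hCne.image _)
    rintro z ⟨c, hc, rfl⟩
    calc (fun c : Fin m → ℝ => ∑ k, ((c k + β) * φ k (a • x + b • y)
            + (β - c k) * ψ k (a • x + b • y))) c
        ≤ a * (∑ k, ((c k + β) * φ k x + (β - c k) * ψ k x))
          + b * (∑ k, ((c k + β) * φ k y + (β - c k) * ψ k y)) := by
          simpa [smul_eq_mul] using
            (hconv c hc).2 (Set.mem_univ x) (Set.mem_univ y) ha hb hab
      _ ≤ a * sSup ((fun c : Fin m → ℝ =>
              ∑ k, ((c k + β) * φ k x + (β - c k) * ψ k x)) '' C)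
          + b * sSup ((fun c : Fin m → ℝ =>
              ∑ k, ((c k + β) * φ k y + (β - c k) * ψ k y)) '' C) :=
          add_le_add
            (mul_le_mul_of_nonneg_left (le_csSup (hbdd x) ⟨c, hc, rfl⟩) ha)
            (mul_le_mul_of_nonneg_left (le_csSup (hbdd y) ⟨c, hc, rfl⟩) hb)
  refine ⟨part1, part2, ?_⟩
  refine ⟨_, fun v => β * ∑ k, (φ k v + ψ k v), part2, ?_, fun v => by rw [part1 v]; ring⟩
  rcases Nat.eq_zero_or_pos m with hm | hm
  · subst hm
    simpa using convexOn_const (0 : ℝ) convex_univ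
  · obtain ⟨c, hc⟩ := hCne
    have hβnn : (0:ℝ) ≤ β := (abs_nonneg _).trans (hβ c hc ⟨0, hm⟩)
    have := (convexOn_finset_sum Finset.univ (fun k v => φ k v + ψ k v)
      (fun k _ => (hφ k).add (hψ k))).smul hβnn
    simpa [smul_eq_mul] using this
end

section
/- Let f_k'(x̄;·) = φ_k − ψ_k with φ_k, ψ_k convex functions on ℝⁿ, for k = 1,...,m, and let p ∈ (1, ∞) with conjugate exponent q. Then ‖F'(x̄;·)‖_p, where F'(x̄;v) = (f_k'(x̄;v))_k, satisfies ‖F'(x̄;v)‖_p = −Σ_k (φ_k(v) + ψ_k(v)) + max_{‖a‖_q = 1} Σ_k [(a_k+1)φ_k(v) + (1−a_k)ψ_k(v)], which exhibits it as a difference of two convex functions of v. -/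
private lemma sign_mul_self_eq_abs (r : ℝ) : Real.sign r * r = |r| := by
  rcases lt_trichotomy r 0 with h | h | h
  · rw [Real.sign_of_neg h, abs_of_neg h]; ring
  · simp [h]
  · rw [Real.sign_of_pos h, abs_of_pos h]; ring

theorem stmt12 {n m : ℕ} (φ ψ : Fin m → EuclideanSpace ℝ (Fin n) → ℝ)
    (hφ : ∀ k, ConvexOn ℝ Set.univ (φ k)) (hψ : ∀ k, ConvexOn ℝ Set.univ (ψ k))
    (df : Fin m → EuclideanSpace ℝ (Fin n) → ℝ)
    (hdf : ∀ k v, df k v = φ k v - ψ k v)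
    (p q : ℝ) (hp : 1 < p) (hpq : 1 / p + 1 / q = 1) :
    (∀ v, (∑ k, |df k v| ^ p) ^ (1 / p)
        = -(∑ k, (φ k v + ψ k v))
          + sSup ((fun a : Fin m → ℝ =>
              ∑ k, ((a k + 1) * φ k v + (1 - a k) * ψ k v)) ''
              {a : Fin m → ℝ | (∑ k, |a k| ^ q) ^ (1 / q) = 1})) ∧
    ∃ P Q : EuclideanSpace ℝ (Fin n) → ℝ,
      ConvexOn ℝ Set.univ P ∧ ConvexOn ℝ Set.univ Q ∧
      ∀ v, (∑ k, |df k v| ^ p) ^ (1 / p) = P v - Q v := by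
  have hp0 : (0:ℝ) < p := lt_trans one_pos hp
  have hpq' : p.HolderConjugate q := Real.holderConjugate_iff.mpr ⟨hp, by simpa [one_div] using hpq⟩
  have hq1 : 1 < q := hpq'.symm.lt
  have hq0 : (0:ℝ) < q := lt_trans one_pos hq1
  by_cases hm : m = 0
  · subst hm
    have hset : {a : Fin 0 → ℝ | (∑ k, |a k| ^ q) ^ (1/q) = 1} = ∅ := by
      ext a
      simp only [Set.mem_setOf_eq, Finset.univ_eq_empty, Finset.sum_empty,
        Set.mem_empty_iff_false, iff_false]
      rw [Real.zero_rpow (one_div_ne_zero hq0.ne')]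
      norm_num
    constructor
    · intro v
      rw [hset]
      simp only [Set.image_empty, Real.sSup_empty, Finset.univ_eq_empty,
        Finset.sum_empty, add_zero, neg_zero]
      rw [Real.zero_rpow (one_div_ne_zero hp0.ne')]
    · exact ⟨0, 0, convexOn_const 0 convex_univ, convexOn_const 0 convex_univ,
        fun v => by
          simp only [Finset.univ_eq_empty, Finset.sum_empty, Pi.zero_apply, sub_zero]
          exact Real.zero_rpow (one_div_ne_zero hp0.ne')⟩
  · set T : EuclideanSpace ℝ (Fin n) → ℝ := fun v => ∑ k, (φ k v + ψ k v) with hT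
    set N : EuclideanSpace ℝ (Fin n) → ℝ := fun v => (∑ k, |df k v| ^ p) ^ (1/p) with hN
    set Sph : Set (Fin m → ℝ) := {a : Fin m → ℝ | (∑ k, |a k| ^ q) ^ (1/q) = 1} with hSph
    set S : EuclideanSpace ℝ (Fin n) → Set ℝ := fun v =>
      (fun a : Fin m → ℝ => ∑ k, ((a k + 1) * φ k v + (1 - a k) * ψ k v)) '' Sph with hS
    -- the sphere condition unfolded
    have hsph : ∀ a : Fin m → ℝ, a ∈ Sph ↔ ∑ k, |a k| ^ q = 1 := by
      intro a
      constructor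
      · intro h
        have h0 : (0:ℝ) ≤ ∑ k, |a k| ^ q := by positivity
        have := congrArg (fun t : ℝ => t ^ q) h
        simpa [one_div, Real.rpow_inv_rpow h0 hq0.ne', Real.one_rpow] using this
      · intro h
        simp [hSph, Set.mem_setOf_eq, h]
    -- sum rewriting
    have himg : ∀ (v : EuclideanSpace ℝ (Fin n)) (a : Fin m → ℝ),
        (∑ k, ((a k + 1) * φ k v + (1 - a k) * ψ k v)) = T v + ∑ k, a k * df k v := by
      intro v a
      rw [hT, ← Finset.sum_add_distrib]
      refine Finset.sum_congr rfl fun k _ => ?_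
      rw [hdf]; ring
    -- a point on the sphere
    obtain ⟨k0⟩ : Nonempty (Fin m) := ⟨⟨0, Nat.pos_of_ne_zero hm⟩⟩
    set e : Fin m → ℝ := fun k => if k = k0 then 1 else 0 with he_def
    have he : e ∈ Sph := by
      rw [hsph]
      have : ∀ k : Fin m, |e k| ^ q = if k = k0 then 1 else 0 := by
        intro k
        by_cases hk : k = k0 <;>
          simp [he_def, hk, Real.zero_rpow hq0.ne', Real.one_rpow]
      simp [this]
    have hSne : ∀ v, (S v).Nonempty := fun v => ⟨_, ⟨e, he, rfl⟩⟩
    -- upper bound (Hölder)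
    have hub : ∀ v, ∀ x ∈ S v, x ≤ T v + N v := by
      rintro v x ⟨a, ha, rfl⟩
      dsimp only
      rw [himg]
      have h1 : ∑ k, a k * df k v = ∑ k, df k v * a k := by
        refine Finset.sum_congr rfl fun k _ => mul_comm _ _
      have h2 := Real.inner_le_Lp_mul_Lq Finset.univ (fun k => df k v) a hpq'
      rw [hSph] at ha
      rw [Set.mem_setOf_eq] at ha
      rw [ha, mul_one] at h2
      rw [h1]
      exact add_le_add_right h2 _
    -- is LUB
    have hlub : ∀ v, IsLUB (S v) (T v + N v) := by
      intro v
      refine ⟨hub v, fun b hb => ?_⟩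
      by_cases hy : ∀ k, df k v = 0
      · have hNv : N v = 0 := by
          have h0 : (∑ k, |df k v| ^ p) = 0 := by
            simp [hy, Real.zero_rpow hp0.ne']
          show (∑ k, |df k v| ^ p) ^ (1/p) = 0
          rw [h0]
          exact Real.zero_rpow (one_div_ne_zero hp0.ne')
        have := hb ⟨e, he, rfl⟩
        dsimp only at this
        rw [himg] at this
        simp only [hy, mul_zero, Finset.sum_const_zero, add_zero] at this
        rw [hNv, add_zero]
        exact this
      · push_neg at hy
        obtain ⟨k1, hk1⟩ := hy
        set s : ℝ := ∑ k, |df k v| ^ p with hs_def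
        have hs_pos : 0 < s := by
          refine Finset.sum_pos' (fun k _ => by positivity) ⟨k1, Finset.mem_univ _, ?_⟩
          exact Real.rpow_pos_of_pos (abs_pos.2 hk1) p
        have hNv : N v = s ^ (1/p) := rfl
        have hN_pos : 0 < N v := by rw [hNv]; positivity
        set c : ℝ := (N v) ^ (p - 1) with hc_def
        have hc_pos : 0 < c := by rw [hc_def]; positivity
        set A : Fin m → ℝ := fun k => Real.sign (df k v) * |df k v| ^ (p - 1) / c with hA_def
        have habsA : ∀ k, |A k| = |df k v| ^ (p - 1) / c := by
          intro k
          by_cases hk : df k v = 0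
          · simp [hA_def, hk, Real.sign_zero, Real.zero_rpow hpq'.sub_one_ne_zero]
          · rw [hA_def]
            rw [abs_div, abs_mul, abs_of_pos hc_pos,
              abs_of_nonneg (Real.rpow_nonneg (abs_nonneg _) _)]
            rcases Real.sign_apply_eq_of_ne_zero _ hk with h | h <;> rw [h] <;> norm_num
        have hAq : ∀ k, |A k| ^ q = |df k v| ^ p / s := by
          intro k
          rw [habsA, Real.div_rpow (Real.rpow_nonneg (abs_nonneg _) _) hc_pos.le]
          congr 1
          · rw [← Real.rpow_mul (abs_nonneg _), hpq'.sub_one_mul_conj]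
          · rw [hc_def, hNv, ← Real.rpow_mul hs_pos.le, ← Real.rpow_mul hs_pos.le]
            rw [show 1/p * (p-1) * q = 1 by
              have := hpq'.sub_one_mul_conj
              field_simp
              linarith [hpq'.sub_one_mul_conj]]
            exact Real.rpow_one s
        have hAsph : A ∈ Sph := by
          rw [hsph]
          have : ∑ k, |A k| ^ q = (∑ k, |df k v| ^ p) / s := by
            rw [Finset.sum_div]
            exact Finset.sum_congr rfl fun k _ => hAq k
          rw [this, ← hs_def, div_self hs_pos.ne']
        have hval : ∑ k, A k * df k v = N v := by
          have habs2 : ∀ r : ℝ, |r| * |r| ^ (p - 1) = |r| ^ p := by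
            intro r
            have hne : (1:ℝ) + (p - 1) ≠ 0 := by
              intro h; exact hp0.ne' (by linarith)
            rw [show |r| * |r| ^ (p - 1) = |r| ^ (1:ℝ) * |r| ^ (p - 1) by rw [Real.rpow_one],
              ← Real.rpow_add' (abs_nonneg r) hne]
            congr 1
            ring
          have h1 : ∀ k, A k * df k v = |df k v| ^ p / c := by
            intro k
            rw [hA_def]
            dsimp only
            rw [div_mul_eq_mul_div, mul_right_comm, sign_mul_self_eq_abs, habs2]
          have hcv : c = s ^ (1/p * (p - 1)) := by
            rw [hc_def, hNv, ← Real.rpow_mul hs_pos.le]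
          have hkey : s ^ (1/p) * s ^ (1/p * (p - 1)) = s := by
            rw [← Real.rpow_add hs_pos,
              show 1/p + 1/p * (p - 1) = 1 by field_simp; ring, Real.rpow_one]
          rw [Finset.sum_congr rfl fun k _ => h1 k, ← Finset.sum_div, ← hs_def, hcv, hNv,
            div_eq_iff (by positivity : (s:ℝ) ^ (1/p * (p - 1)) ≠ 0)]
          exact hkey.symm
        have := hb ⟨A, hAsph, rfl⟩
        dsimp only at this
        rw [himg, hval] at this
        exact this
    have hsSup : ∀ v, sSup (S v) = T v + N v := fun v => (hlub v).csSup_eq (hSne v)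
    constructor
    · intro v
      have := hsSup v
      rw [hS] at this
      rw [this]
      simp [hT, hN]
    · refine ⟨fun v => sSup (S v), T, ?_, ?_, ?_⟩
      · -- P convex
        refine ⟨convex_univ, fun x _ y _ α β hα hβ hαβ => ?_⟩
        simp only [smul_eq_mul]
        refine csSup_le (hSne _) ?_
        rintro z ⟨a, ha, rfl⟩
        dsimp only
        have haq := (hsph a).1 ha
        have hak : ∀ k, |a k| ≤ 1 := by
          intro k
          by_contra h
          push_neg at h
          have h1 : 1 < |a k| ^ q :=
            ((Real.one_lt_rpow_iff_of_pos (lt_trans one_pos h)).2 (Or.inl ⟨h, hq0⟩))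
          have h2 : |a k| ^ q ≤ ∑ j, |a j| ^ q :=
            Finset.single_le_sum (f := fun j => |a j| ^ q) (fun j _ => by positivity)
              (Finset.mem_univ k)
          rw [haq] at h2
          linarith
        have step1 : ∑ k, ((a k + 1) * φ k (α • x + β • y) + (1 - a k) * ψ k (α • x + β • y))
            ≤ ∑ k, ((a k + 1) * (α * φ k x + β * φ k y)
                + (1 - a k) * (α * ψ k x + β * ψ k y)) := by
          refine Finset.sum_le_sum fun k _ => ?_
          have hφk := (hφ k).2 (Set.mem_univ x) (Set.mem_univ y) hα hβ hαβ
          have hψk := (hψ k).2 (Set.mem_univ x) (Set.mem_univ y) hα hβ hαβ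
          simp only [smul_eq_mul] at hφk hψk
          have h1 : 0 ≤ a k + 1 := by have := (abs_le.1 (hak k)).1; linarith
          have h2 : 0 ≤ 1 - a k := by have := (abs_le.1 (hak k)).2; linarith
          exact add_le_add (mul_le_mul_of_nonneg_left hφk h1)
            (mul_le_mul_of_nonneg_left hψk h2)
        have step2 : ∑ k, ((a k + 1) * (α * φ k x + β * φ k y)
                + (1 - a k) * (α * ψ k x + β * ψ k y))
            = α * (∑ k, ((a k + 1) * φ k x + (1 - a k) * ψ k x))
              + β * (∑ k, ((a k + 1) * φ k y + (1 - a k) * ψ k y)) := by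
          rw [Finset.mul_sum, Finset.mul_sum, ← Finset.sum_add_distrib]
          exact Finset.sum_congr rfl fun k _ => by ring
        have hx_le : (∑ k, ((a k + 1) * φ k x + (1 - a k) * ψ k x)) ≤ sSup (S x) :=
          le_csSup (hlub x).bddAbove ⟨a, ha, rfl⟩
        have hy_le : (∑ k, ((a k + 1) * φ k y + (1 - a k) * ψ k y)) ≤ sSup (S y) :=
          le_csSup (hlub y).bddAbove ⟨a, ha, rfl⟩
        calc ∑ k, ((a k + 1) * φ k (α • x + β • y) + (1 - a k) * ψ k (α • x + β • y))
            ≤ α * (∑ k, ((a k + 1) * φ k x + (1 - a k) * ψ k x))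
              + β * (∑ k, ((a k + 1) * φ k y + (1 - a k) * ψ k y)) := by
              rw [← step2]; exact step1
          _ ≤ α * sSup (S x) + β * sSup (S y) :=
              add_le_add (mul_le_mul_of_nonneg_left hx_le hα)
                (mul_le_mul_of_nonneg_left hy_le hβ)
      · -- Q convex
        refine ⟨convex_univ, fun x _ y _ α β hα hβ hαβ => ?_⟩
        simp only [hT, smul_eq_mul, Finset.mul_sum, ← Finset.sum_add_distrib]
        refine Finset.sum_le_sum fun k _ => ?_
        have hφk := (hφ k).2 (Set.mem_univ x) (Set.mem_univ y) hα hβ hαβ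
        have hψk := (hψ k).2 (Set.mem_univ x) (Set.mem_univ y) hα hβ hαβ
        simp only [smul_eq_mul] at hφk hψk
        nlinarith [hφk, hψk]
      · intro v
        show N v = sSup (S v) - T v
        rw [hsSup v]
        ring
end

section
/- Let g : ℝⁿ → ℝ be Bouligand differentiable and dd-convex at x̄ (i.e., v ↦ g'(x̄;v) is convex). Let X ⊆ ℝⁿ be closed and convex with x̄ ∈ X. Then for all x ∈ X, g'(x̄; x − x̄) = sup { ⟨a', x − x̄⟩ : a' ∈ ∂̂g(x̄) + N(x̄; X) }, where ∂̂g(x̄) is the regular subdifferential of g at x̄ and N(x̄;X) is the normal cone of X at x̄. In particular, x̄ satisfies g'(x̄; x − x̄) ≥ 0 for all x ∈ X if and only if 0 ∈ ∂̂g(x̄) + N(x̄; X). -/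
open Filter Pointwise

section Aux

variable {E : Type*} [NormedAddCommGroup E]

lemma df_zero' [NormedSpace ℝ E] {g : E → ℝ} {x₀ : E} {df : E → ℝ}
    (hdf : ∀ v, dirDerivAt g x₀ v (df v)) : df 0 = 0 := by
  have h0 : Tendsto (fun τ : ℝ => (g (x₀ + τ • (0:E)) - g x₀) / τ)
      (nhdsWithin 0 (Set.Ioi 0)) (nhds 0) := by
    have he : (fun τ : ℝ => (g (x₀ + τ • (0:E)) - g x₀) / τ) = fun _ => 0 := by
      funext τ; simp
    rw [he]; exact tendsto_const_nhds
  exact tendsto_nhds_unique (hdf 0) h0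

lemma df_smul' [NormedSpace ℝ E] {g : E → ℝ} {x₀ : E} {df : E → ℝ}
    (hdf : ∀ v, dirDerivAt g x₀ v (df v)) {t : ℝ} (ht : 0 < t) (v : E) :
    df (t • v) = t * df v := by
  have hmap : Tendsto (fun τ : ℝ => t * τ) (nhdsWithin 0 (Set.Ioi 0))
      (nhdsWithin 0 (Set.Ioi 0)) := by
    apply tendsto_nhdsWithin_of_tendsto_nhds_of_eventually_within
    · have h1 : Tendsto (fun τ : ℝ => t * τ) (nhds 0) (nhds (t * 0)) :=
        (continuous_const.mul continuous_id).tendsto 0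
      simpa using h1.mono_left nhdsWithin_le_nhds
    · exact eventually_mem_nhdsWithin.mono fun τ hτ => mul_pos ht hτ
  have h2 := ((hdf v).comp hmap).const_mul t
  have h3 : Tendsto (fun τ : ℝ => (g (x₀ + τ • (t • v)) - g x₀) / τ)
      (nhdsWithin 0 (Set.Ioi 0)) (nhds (t * df v)) := by
    refine h2.congr' ?_
    filter_upwards [eventually_mem_nhdsWithin] with τ hτ
    have hτ0 : (τ : ℝ) ≠ 0 := ne_of_gt hτ
    have ht0 : t ≠ 0 := ne_of_gt ht
    show t * ((g (x₀ + (t * τ) • v) - g x₀) / (t * τ)) = (g (x₀ + τ • (t • v)) - g x₀) / τ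
    rw [smul_smul, mul_comm τ t]
    field_simp
  exact tendsto_nhds_unique (hdf (t • v)) h3

variable [InnerProductSpace ℝ E]

lemma exists_subgrad [CompleteSpace E] {f : E → ℝ} (hconv : ConvexOn ℝ Set.univ f)
    (hcont : Continuous f) (v₀ : E) :
    ∃ a : E, ∀ d, f v₀ + (inner ℝ a (d - v₀) : ℝ) ≤ f d := by
  set S : Set (E × ℝ) := {p | f p.1 < p.2} with hS
  have hSo : IsOpen S := isOpen_lt (hcont.comp continuous_fst) continuous_snd
  have hScv : Convex ℝ S := by
    intro p hp q hq a b ha hb hab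
    simp only [hS, Set.mem_setOf_eq, Prod.fst_add, Prod.snd_add, Prod.smul_fst, Prod.smul_snd,
      smul_eq_mul] at hp hq ⊢
    have h3 := hconv.2 (Set.mem_univ p.1) (Set.mem_univ q.1) ha hb hab
    simp only [smul_eq_mul] at h3
    rcases ha.lt_or_eq with ha' | ha'
    · have h1 := mul_lt_mul_of_pos_left hp ha'
      have h2 := mul_le_mul_of_nonneg_left hq.le hb
      linarith
    · have hb1 : b = 1 := by linarith
      have ha0 : a = 0 := ha'.symm
      subst hb1; subst ha0
      simpa using hq
  have hx : ((v₀, f v₀) : E × ℝ) ∉ S := by simp [hS]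
  obtain ⟨F, hF⟩ := geometric_hahn_banach_open_point hScv hSo hx
  set c : ℝ := F (0, 1) with hc
  have Fsplit : ∀ (d : E) (t : ℝ), F (d, t) = F (d, 0) + t * c := by
    intro d t
    have he : ((d, t) : E × ℝ) = (d, (0:ℝ)) + t • ((0:E), (1:ℝ)) := by
      simp [Prod.ext_iff]
    rw [he, map_add, map_smul, smul_eq_mul, hc]
  have key : ∀ (d : E) (t : ℝ), f d < t → F (d, 0) + t * c < F (v₀, 0) + f v₀ * c := by
    intro d t hdt
    have := hF (d, t) hdt
    rw [Fsplit d t, Fsplit v₀ (f v₀)] at this; linarith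
  have hcneg : c < 0 := by
    have := key v₀ (f v₀ + 1) (by linarith)
    linarith
  have key2 : ∀ d : E, F (d, 0) + f d * c ≤ F (v₀, 0) + f v₀ * c := by
    intro d
    by_contra h
    push_neg at h
    set ε := (F (d, 0) + f d * c - (F (v₀, 0) + f v₀ * c)) / (-c) with hε
    have hεpos : 0 < ε := div_pos (by linarith) (by linarith)
    have hεc : ε * (-c) = F (d, 0) + f d * c - (F (v₀, 0) + f v₀ * c) :=
      div_mul_cancel₀ _ (by linarith)
    have := key d (f d + ε) (by linarith)
    nlinarith
  refine ⟨(InnerProductSpace.toDual ℝ E).symm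
    ((-c)⁻¹ • (F.comp (ContinuousLinearMap.inl ℝ E ℝ))), ?_⟩
  have ha : ∀ d : E, (inner ℝ ((InnerProductSpace.toDual ℝ E).symm
      ((-c)⁻¹ • (F.comp (ContinuousLinearMap.inl ℝ E ℝ)))) d : ℝ) = (-c)⁻¹ * F (d, 0) := by
    intro d
    rw [InnerProductSpace.toDual_symm_apply]
    simp [ContinuousLinearMap.inl_apply]
  intro d
  rw [inner_sub_right, ha, ha]
  have h := key2 d
  have ht : (0:ℝ) < (-c)⁻¹ := inv_pos.2 (by linarith)
  have htc : (-c)⁻¹ * (-c) = 1 := inv_mul_cancel₀ (by linarith)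
  have e1 : (-c)⁻¹ * (f d * c) = -(f d) := by
    have he : (-c)⁻¹ * (f d * c) = -((-c)⁻¹ * (-c)) * f d := by ring
    rw [he, htc]; ring
  have e2 : (-c)⁻¹ * (f v₀ * c) = -(f v₀) := by
    have he : (-c)⁻¹ * (f v₀ * c) = -((-c)⁻¹ * (-c)) * f v₀ := by ring
    rw [he, htc]; ring
  have h2 := mul_le_mul_of_nonneg_left h ht.le
  rw [mul_add, mul_add, e1, e2] at h2
  linarith

lemma exists_max' [CompleteSpace E] {df : E → ℝ} (hconv : ConvexOn ℝ Set.univ df)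
    (hcont : Continuous df) (hzero : df 0 = 0)
    (hsmul : ∀ t : ℝ, 0 < t → ∀ v : E, df (t • v) = t * df v) (v₀ : E) :
    ∃ a : E, (∀ d, (inner ℝ a d : ℝ) ≤ df d) ∧ (inner ℝ a v₀ : ℝ) = df v₀ := by
  obtain ⟨a, ha⟩ := exists_subgrad hconv hcont v₀
  have h2 : (inner ℝ a v₀ : ℝ) ≤ df v₀ := by
    have h := ha ((2:ℝ) • v₀)
    rw [hsmul 2 (by norm_num) v₀] at h
    have hv : (2:ℝ) • v₀ - v₀ = v₀ := by
      rw [two_smul]; abel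
    rw [hv] at h; linarith
  have h3 : df v₀ ≤ (inner ℝ a v₀ : ℝ) := by
    have h := ha 0
    rw [hzero, zero_sub, inner_neg_right] at h
    linarith
  have heq : (inner ℝ a v₀ : ℝ) = df v₀ := le_antisymm h2 h3
  refine ⟨a, fun d => ?_, heq⟩
  have h := ha d
  rw [inner_sub_right] at h
  linarith

end Aux

theorem stmt13 {n : ℕ} (g : EuclideanSpace ℝ (Fin n) → ℝ)
    (x₀ : EuclideanSpace ℝ (Fin n)) (df : EuclideanSpace ℝ (Fin n) → ℝ)
    (X : Set (EuclideanSpace ℝ (Fin n)))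
    (hlip : LocallyLipschitz g)
    (hdf : ∀ v, dirDerivAt g x₀ v (df v))
    (hddconv : ConvexOn ℝ Set.univ df)
    (hXcl : IsClosed X) (hXcv : Convex ℝ X) (hx₀ : x₀ ∈ X) :
    (∀ x ∈ X, df (x - x₀) =
      sSup ((fun a' => (inner ℝ a' (x - x₀) : ℝ)) ''
        ({a : EuclideanSpace ℝ (Fin n) | ∀ d, (inner ℝ a d : ℝ) ≤ df d} +
          {b : EuclideanSpace ℝ (Fin n) | ∀ y ∈ X, (inner ℝ b (y - x₀) : ℝ) ≤ 0}))) ∧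
    ((∀ x ∈ X, 0 ≤ df (x - x₀)) ↔
      (0 : EuclideanSpace ℝ (Fin n)) ∈
        {a : EuclideanSpace ℝ (Fin n) | ∀ d, (inner ℝ a d : ℝ) ≤ df d} +
          {b : EuclideanSpace ℝ (Fin n) | ∀ y ∈ X, (inner ℝ b (y - x₀) : ℝ) ≤ 0}) := by
  set A : Set (EuclideanSpace ℝ (Fin n)) := {a : EuclideanSpace ℝ (Fin n) | ∀ d, (inner ℝ a d : ℝ) ≤ df d} with hAdef
  set N : Set (EuclideanSpace ℝ (Fin n)) := {b : EuclideanSpace ℝ (Fin n) | ∀ y ∈ X, (inner ℝ b (y - x₀) : ℝ) ≤ 0} with hNdef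
  have hcont : Continuous df := by
    have := hddconv.continuousOn isOpen_univ
    rwa [continuousOn_univ] at this
  have hzero : df 0 = 0 := df_zero' hdf
  have hsmul : ∀ t : ℝ, 0 < t → ∀ v : EuclideanSpace ℝ (Fin n), df (t • v) = t * df v :=
    fun t ht v => df_smul' hdf ht v
  have hmax : ∀ v₀ : EuclideanSpace ℝ (Fin n), ∃ a : EuclideanSpace ℝ (Fin n), (∀ d, (inner ℝ a d : ℝ) ≤ df d) ∧ (inner ℝ a v₀ : ℝ) = df v₀ :=
    exists_max' hddconv hcont hzero hsmul
  have h0N : (0:EuclideanSpace ℝ (Fin n)) ∈ N := by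
    intro y hy; simp
  constructor
  · intro x hx
    obtain ⟨a₀, ha₀A, ha₀⟩ := hmax (x - x₀)
    have hmemAN : a₀ ∈ A + N := by
      have hA0 : a₀ ∈ A := ha₀A
      have := Set.add_mem_add hA0 h0N
      rwa [add_zero] at this
    have hmem : df (x - x₀) ∈ (fun a' => (inner ℝ a' (x - x₀) : ℝ)) '' (A + N) :=
      ⟨a₀, hmemAN, ha₀⟩
    have hub : ∀ r ∈ (fun a' => (inner ℝ a' (x - x₀) : ℝ)) '' (A + N), r ≤ df (x - x₀) := by
      rintro r ⟨a', ha', rfl⟩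
      rw [Set.mem_add] at ha'
      obtain ⟨a, haA, b, hbN, rfl⟩ := ha'
      have h1 := haA (x - x₀)
      have h2 := hbN x hx
      show (inner ℝ (a + b) (x - x₀) : ℝ) ≤ df (x - x₀)
      rw [inner_add_left]
      linarith
    exact le_antisymm (le_csSup ⟨df (x - x₀), hub⟩ hmem) (csSup_le ⟨_, hmem⟩ hub)
  · constructor
    · intro hpos
      -- A is compact convex nonempty
      have hAcl : IsClosed A := by
        have he : A = ⋂ d : EuclideanSpace ℝ (Fin n), {a : EuclideanSpace ℝ (Fin n) | (inner ℝ a d : ℝ) ≤ df d} := by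
          ext a; simp [hAdef, Set.mem_iInter]
        rw [he]
        exact isClosed_iInter fun d =>
          isClosed_le (continuous_id.inner continuous_const) continuous_const
      have hAcv : Convex ℝ A := by
        intro a1 h1 a2 h2 α β hα hβ hab d
        have e : (inner ℝ (α • a1 + β • a2) d : ℝ) = α * inner ℝ a1 d + β * inner ℝ a2 d := by
          rw [inner_add_left, real_inner_smul_left, real_inner_smul_left]
        rw [e]
        have k1 := mul_le_mul_of_nonneg_left (h1 d) hα
        have k2 := mul_le_mul_of_nonneg_left (h2 d) hβ
        have hsum : α * df d + β * df d = df d := by rw [← add_mul, hab, one_mul]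
        linarith
      obtain ⟨M, hM⟩ : ∃ M : ℝ, ∀ r ∈ df '' Metric.closedBall (0:EuclideanSpace ℝ (Fin n)) 1, r ≤ M := by
        obtain ⟨M, hM⟩ := ((isCompact_closedBall (0:EuclideanSpace ℝ (Fin n)) 1).image hcont).bddAbove
        exact ⟨M, fun r hr => hM hr⟩
      have hAsub : A ⊆ Metric.closedBall (0:EuclideanSpace ℝ (Fin n)) (max M 0) := by
        intro a haA
        rw [Metric.mem_closedBall, dist_zero_right]
        by_cases h : a = 0
        · simp [h, le_max_iff]
        · have hna : (0:ℝ) < ‖a‖ := norm_pos_iff.mpr h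
          set u := ‖a‖⁻¹ • a with hu
          have huball : u ∈ Metric.closedBall (0:EuclideanSpace ℝ (Fin n)) 1 := by
            rw [Metric.mem_closedBall, dist_zero_right, hu, norm_smul, norm_inv, norm_norm,
              inv_mul_cancel₀ (ne_of_gt hna)]
          have hinner : (inner ℝ a u : ℝ) = ‖a‖ := by
            rw [hu, real_inner_smul_right, real_inner_self_eq_norm_mul_norm]
            field_simp
          have := haA u
          rw [hinner] at this
          have := hM (df u) ⟨u, huball, rfl⟩
          calc ‖a‖ ≤ df u := by rw [← hinner]; exact haA u
            _ ≤ M := this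
            _ ≤ max M 0 := le_max_left _ _
      have hAcp : IsCompact A :=
        Metric.isCompact_of_isClosed_isBounded hAcl
          (Metric.isBounded_closedBall.subset hAsub)
      -- D: dual cone of X - x₀
      set D : Set (EuclideanSpace ℝ (Fin n)) := {a : EuclideanSpace ℝ (Fin n) | ∀ y ∈ X, (0:ℝ) ≤ inner ℝ a (y - x₀)} with hDdef
      have hDcl : IsClosed D := by
        have he : D = ⋂ y : EuclideanSpace ℝ (Fin n), ⋂ _ : y ∈ X, {a : EuclideanSpace ℝ (Fin n) | (0:ℝ) ≤ inner ℝ a (y - x₀)} := by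
          ext a; simp [hDdef, Set.mem_iInter]
        rw [he]
        exact isClosed_iInter fun y => isClosed_iInter fun _ =>
          isClosed_le continuous_const (continuous_id.inner continuous_const)
      have hDcv : Convex ℝ D := by
        intro a1 h1 a2 h2 α β hα hβ hab y hy
        have e : (inner ℝ (α • a1 + β • a2) (y - x₀) : ℝ)
            = α * inner ℝ a1 (y - x₀) + β * inner ℝ a2 (y - x₀) := by
          rw [inner_add_left, real_inner_smul_left, real_inner_smul_left]
        rw [e]
        have k1 := mul_le_mul_of_nonneg_left (h1 y hy) hα
        have k2 := mul_le_mul_of_nonneg_left (h2 y hy) hβ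
        linarith
      -- claim : ∃ a ∈ A ∩ D
      have hclaim : ∃ a, a ∈ A ∧ a ∈ D := by
        by_contra hcon
        push_neg at hcon
        have hdisj : Disjoint A D := Set.disjoint_left.mpr fun {a} ha hd => hcon a ha hd
        obtain ⟨F, u, v, hFA, huv, hFD⟩ :=
          geometric_hahn_banach_compact_closed hAcv hAcp hDcv hDcl hdisj
        have h0D : (0:EuclideanSpace ℝ (Fin n)) ∈ D := by intro y hy; simp
        have hv0 : v < 0 := by
          have := hFD 0 h0D
          simpa using this
        have hFDpos : ∀ cc ∈ D, (0:ℝ) ≤ F cc := by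
          intro cc hcc
          by_contra hneg
          push_neg at hneg
          have ht : 0 < 2 * v / F cc := div_pos_of_neg_of_neg (by linarith) hneg
          have hsm : (2 * v / F cc) • cc ∈ D := by
            intro y hy
            rw [real_inner_smul_left]
            exact mul_nonneg ht.le (hcc y hy)
          have hh := hFD _ hsm
          rw [map_smul, smul_eq_mul, div_mul_cancel₀ _ (ne_of_lt hneg)] at hh
          linarith
        set w : EuclideanSpace ℝ (Fin n) := (InnerProductSpace.toDual ℝ (EuclideanSpace ℝ (Fin n))).symm F with hwdef
        have hw : ∀ d : EuclideanSpace ℝ (Fin n), (inner ℝ w d : ℝ) = F d := fun d =>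
          InnerProductSpace.toDual_symm_apply
        -- the cone generated by X - x₀
        set C : ConvexCone ℝ (EuclideanSpace ℝ (Fin n)) :=
          { carrier := {p : EuclideanSpace ℝ (Fin n) | ∃ t : ℝ, 0 < t ∧ ∃ z ∈ X, p = t • (z - x₀)}
            smul_mem' := by
              rintro c hc p ⟨t, ht, z, hz, rfl⟩
              exact ⟨c * t, mul_pos hc ht, z, hz, by rw [smul_smul]⟩
            add_mem' := by
              rintro p ⟨t, ht, z, hz, rfl⟩ q ⟨s, hs, z', hz', rfl⟩
              have hts : (0:ℝ) < t + s := by linarith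
              have hts0 : t + s ≠ 0 := ne_of_gt hts
              refine ⟨t + s, hts, (t/(t+s)) • z + (s/(t+s)) • z',
                hXcv hz hz' (div_nonneg ht.le hts.le) (div_nonneg hs.le hts.le)
                  (by field_simp), ?_⟩
              have e1 : (t + s) * (t / (t + s)) = t := by field_simp
              have e2 : (t + s) * (s / (t + s)) = s := by field_simp
              rw [smul_sub t, smul_sub s, smul_sub (t+s), smul_add, smul_smul, smul_smul,
                e1, e2, add_smul]
              abel } with hCdef
        set K := C.closure with hKdef
        have hKcl : IsClosed (K : Set (EuclideanSpace ℝ (Fin n))) := by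
          rw [hKdef, ConvexCone.coe_closure]; exact isClosed_closure
        have hmemK : ∀ z ∈ X, z - x₀ ∈ (K : Set (EuclideanSpace ℝ (Fin n))) := by
          intro z hz
          rw [hKdef, ConvexCone.coe_closure]
          exact subset_closure ⟨1, one_pos, z, hz, (one_smul ℝ _).symm⟩
        have hKne : (K : Set (EuclideanSpace ℝ (Fin n))).Nonempty := ⟨x₀ - x₀, hmemK x₀ hx₀⟩
        have hwK : w ∈ K := by
          by_contra hwn
          obtain ⟨y, hy1, hy2⟩ :=
            ProperCone.hyperplane_separation' (⟨K.toPointedCone (ConvexCone.Pointed.of_nonempty_of_isClosed hKne hKcl), hKcl⟩ : ProperCone ℝ (EuclideanSpace ℝ (Fin n))) hwn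
          have hyD : y ∈ D := by
            intro z hz
            have := hy1 (z - x₀) (hmemK z hz)
            rwa [real_inner_comm] at this
          have hpos' := hFDpos y hyD
          rw [← hw y, real_inner_comm] at hpos'
          linarith [real_inner_comm w y]
        have hdfw : 0 ≤ df w := by
          have hsubset : (C : Set (EuclideanSpace ℝ (Fin n))) ⊆ {p : EuclideanSpace ℝ (Fin n) | 0 ≤ df p} := by
            rintro p ⟨t, ht, z, hz, rfl⟩
            have hzp := hpos z hz
            rw [Set.mem_setOf_eq, hsmul t ht]
            exact mul_nonneg ht.le hzp
          have hclS : IsClosed {p : EuclideanSpace ℝ (Fin n) | 0 ≤ df p} := isClosed_le continuous_const hcont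
          have hKsub : (K : Set (EuclideanSpace ℝ (Fin n))) ⊆ {p : EuclideanSpace ℝ (Fin n) | 0 ≤ df p} := by
            rw [hKdef, ConvexCone.coe_closure]
            exact closure_minimal hsubset hclS
          exact hKsub hwK
        obtain ⟨a₀, ha₀A, ha₀⟩ := hmax w
        have hFa : F a₀ = df w := by
          rw [← hw a₀, real_inner_comm]; exact ha₀
        have := hFA a₀ ha₀A
        linarith
      obtain ⟨a, haA, haD⟩ := hclaim
      have hnegN : -a ∈ N := by
        intro y hy
        rw [inner_neg_left]
        linarith [haD y hy]
      have := Set.add_mem_add haA hnegN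
      rwa [add_neg_cancel] at this
    · intro h0 x hx
      rw [Set.mem_add] at h0
      obtain ⟨a, haA, b, hbN, hab⟩ := h0
      have h1 := haA (x - x₀)
      have h2 := hbN x hx
      have h3 : (inner ℝ (a + b) (x - x₀) : ℝ) = 0 := by
        rw [hab, inner_zero_left]
      rw [inner_add_left] at h3
      linarith
end

section
/- Let X be a convex set, and for j = 1,...,J let n_j : X → ℝ be convex and nonnegative and d_j : X → ℝ be concave and positive. Let x̄ ∈ X, ρ > 0, and suppose x̂ ∈ X satisfies max_{1≤j≤J} (1/d_j(x̄)) [ n_j(x̂) − n_j(x̄) − (n_j(x̄)/d_j(x̄)) (d_j(x̂) − d_j(x̄)) ] + (ρ/2)‖x̂ − x̄‖² ≤ 0. Then max_{1≤j≤J} n_j(x̂)/d_j(x̂) ≤ max_{1≤j≤J} n_j(x̄)/d_j(x̄) − (ρ/2)‖x̂ − x̄‖² · min_{1≤j≤J} d_j(x̄)/d_j(x̂). -/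
/-! Multiplying the `j`-th linearized inequality by `d_j(x̄)/d_j(x̂) > 0` turns its left-hand side
into exactly `n_j(x̂)/d_j(x̂) - n_j(x̄)/d_j(x̄)`; bounding each ratio by the maximum and each weight
`d_j(x̄)/d_j(x̂)` by the minimum then gives the descent inequality. -/

lemma div_sub_div_eq_linearization_mul {n₀ d₀ n₁ d₁ : ℝ} (h₀ : d₀ ≠ 0) (h₁ : d₁ ≠ 0) :
    n₁ / d₁ - n₀ / d₀ = 1 / d₀ * (n₁ - n₀ - n₀ / d₀ * (d₁ - d₀)) * (d₀ / d₁) := by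
  field_simp
  ring

lemma div_le_div_sub_of_linearization_le {n₀ d₀ n₁ d₁ c : ℝ} (h₀ : 0 < d₀) (h₁ : 0 < d₁)
    (h : 1 / d₀ * (n₁ - n₀ - n₀ / d₀ * (d₁ - d₀)) ≤ -c) :
    n₁ / d₁ ≤ n₀ / d₀ - c * (d₀ / d₁) := by
  have := mul_le_mul_of_nonneg_right h (div_pos h₀ h₁).le
  rw [← div_sub_div_eq_linearization_mul h₀.ne' h₁.ne'] at this
  linarith

lemma Finset.sup'_le_sup'_sub_mul_inf' {ι α : Type*} [Ring α] [LinearOrder α] [IsOrderedRing α]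
    {s : Finset ι} (hs : s.Nonempty) {f g w : ι → α} {c : α} (hc : 0 ≤ c)
    (h : ∀ i ∈ s, f i ≤ g i - c * w i) :
    s.sup' hs f ≤ s.sup' hs g - c * s.inf' hs w :=
  Finset.sup'_le hs f fun i hi => calc
    f i ≤ g i - c * w i := h i hi
    _ ≤ s.sup' hs g - c * s.inf' hs w :=
      sub_le_sub (s.le_sup' g hi) (mul_le_mul_of_nonneg_left (s.inf'_le w hi) hc)

theorem stmt16_general {m J : ℕ} (hJ : 0 < J)
    (X : Set (EuclideanSpace ℝ (Fin m)))
    (nn dd : Fin J → EuclideanSpace ℝ (Fin m) → ℝ)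
    (hd0 : ∀ j, ∀ x ∈ X, 0 < dd j x)
    (x₀ xhat : EuclideanSpace ℝ (Fin m)) (hx₀ : x₀ ∈ X) (hxhat : xhat ∈ X)
    (ρ : ℝ) (hρ : 0 < ρ)
    (hineq :
      (Finset.univ.sup' (Finset.univ_nonempty_iff.mpr ⟨⟨0, hJ⟩⟩)
        (fun j => (1 / dd j x₀) *
          (nn j xhat - nn j x₀ - (nn j x₀ / dd j x₀) * (dd j xhat - dd j x₀))))
        + ρ / 2 * ‖xhat - x₀‖ ^ 2 ≤ 0) :
    Finset.univ.sup' (Finset.univ_nonempty_iff.mpr ⟨⟨0, hJ⟩⟩)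
        (fun j => nn j xhat / dd j xhat)
      ≤ Finset.univ.sup' (Finset.univ_nonempty_iff.mpr ⟨⟨0, hJ⟩⟩)
          (fun j => nn j x₀ / dd j x₀)
        - ρ / 2 * ‖xhat - x₀‖ ^ 2 *
          Finset.univ.inf' (Finset.univ_nonempty_iff.mpr ⟨⟨0, hJ⟩⟩)
            (fun j => dd j x₀ / dd j xhat) := by
  refine Finset.sup'_le_sup'_sub_mul_inf' _ (by positivity) fun j hj => ?_
  refine div_le_div_sub_of_linearization_le (hd0 j x₀ hx₀) (hd0 j xhat hxhat) ?_
  have := Finset.le_sup' (fun j => 1 / dd j x₀ *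
    (nn j xhat - nn j x₀ - nn j x₀ / dd j x₀ * (dd j xhat - dd j x₀))) hj
  linarith

theorem stmt16 {m J : ℕ} (hJ : 0 < J)
    (X : Set (EuclideanSpace ℝ (Fin m))) (hX : Convex ℝ X)
    (nn dd : Fin J → EuclideanSpace ℝ (Fin m) → ℝ)
    (hn : ∀ j, ConvexOn ℝ X (nn j)) (hn0 : ∀ j, ∀ x ∈ X, 0 ≤ nn j x)
    (hd : ∀ j, ConcaveOn ℝ X (dd j)) (hd0 : ∀ j, ∀ x ∈ X, 0 < dd j x)
    (x₀ xhat : EuclideanSpace ℝ (Fin m)) (hx₀ : x₀ ∈ X) (hxhat : xhat ∈ X)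
    (ρ : ℝ) (hρ : 0 < ρ)
    (hineq :
      (Finset.univ.sup' (Finset.univ_nonempty_iff.mpr ⟨⟨0, hJ⟩⟩)
        (fun j => (1 / dd j x₀) *
          (nn j xhat - nn j x₀ - (nn j x₀ / dd j x₀) * (dd j xhat - dd j x₀))))
        + ρ / 2 * ‖xhat - x₀‖ ^ 2 ≤ 0) :
    Finset.univ.sup' (Finset.univ_nonempty_iff.mpr ⟨⟨0, hJ⟩⟩)
        (fun j => nn j xhat / dd j xhat)
      ≤ Finset.univ.sup' (Finset.univ_nonempty_iff.mpr ⟨⟨0, hJ⟩⟩)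
          (fun j => nn j x₀ / dd j x₀)
        - ρ / 2 * ‖xhat - x₀‖ ^ 2 *
          Finset.univ.inf' (Finset.univ_nonempty_iff.mpr ⟨⟨0, hJ⟩⟩)
            (fun j => dd j x₀ / dd j xhat) :=
  stmt16_general hJ X nn dd hd0 x₀ xhat hx₀ hxhat ρ hρ hineq
end
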